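/- Let p > 0 and let Y be a geometric random variable with parameter θ ∈ (0,1), i.e. 𝐏(Y = k) = (1−θ)^k θ for integers k ≥ 0. Setting λ = −ln(1−θ), one has 𝐄[Y^p] ≤ C_p · θ/λ^{p+1} + 1, where C_p is a positive finite constant depending only on p (not on θ); explicitly one may take C_p = p^{p+1} e^{−p} + Γ(p+1). -/

import Mathlib

/-!
With `λ = -log (1 - θ)` we have `(1 - θ) ^ k = exp (-λ k)`, so the moment is `θ ∑ f k` for
`f x = x ^ p * exp (-λ x)`. This `f` increases up to `p / λ` and decreases afterwards, so every
term except the larger of the two next to the peak is bounded by the integral of `f` over an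
adjacent unit interval, these intervals being disjoint. Hence
`∑ f k ≤ f (p / λ) + ∫₀^∞ f = (p / λ) ^ p e^{-p} + Γ(p + 1) / λ ^ (p + 1)`, and it remains to use
`(p / λ) ^ p ≤ 1 + (p / λ) ^ (p + 1)` and `θ e^{-p} ≤ 1`.
-/

open MeasureTheory ProbabilityTheory

open Real Set

section Unimodal

variable {f : ℝ → ℝ} {m : ℝ}

lemma MonotoneOn.apply_le_of_antitoneOn (hmono : MonotoneOn f (Icc 0 m))
    (hanti : AntitoneOn f (Ici m)) {x : ℝ} (hx : 0 ≤ x) : f x ≤ f m := by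
  rcases le_total x m with h | h
  · exact hmono ⟨hx, h⟩ ⟨hx.trans h, le_rfl⟩ h
  · exact hanti self_mem_Ici h h

lemma MonotoneOn.min_le_of_antitoneOn (hmono : MonotoneOn f (Icc 0 m))
    (hanti : AntitoneOn f (Ici m)) {a b x : ℝ} (ha : 0 ≤ a) (hx : x ∈ Icc a b) :
    min (f a) (f b) ≤ f x := by
  rcases le_total x m with h | h
  · exact (min_le_left _ _).trans (hmono ⟨ha, hx.1.trans h⟩ ⟨ha.trans hx.1, h⟩ hx.1)
  · exact (min_le_right _ _).trans (hanti h (h.trans hx.2) hx.2)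

lemma MonotoneOn.add_apply_add_one_le_of_antitoneOn (hmono : MonotoneOn f (Icc 0 m))
    (hanti : AntitoneOn f (Ici m)) {a : ℝ} (ha : 0 ≤ a)
    (hint : IntervalIntegrable f volume a (a + 1)) :
    f a + f (a + 1) ≤ f m + ∫ x in a..a + 1, f x := by
  have hmin : min (f a) (f (a + 1)) ≤ ∫ x in a..a + 1, f x := by
    simpa using intervalIntegral.integral_mono_on (le_add_of_nonneg_right zero_le_one)
      intervalIntegrable_const hint fun x hx => hmono.min_le_of_antitoneOn hanti ha hx
  have hmax : max (f a) (f (a + 1)) ≤ f m :=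
    max_le (hmono.apply_le_of_antitoneOn hanti ha)
      (hmono.apply_le_of_antitoneOn hanti (by linarith))
  linarith [min_add_max (f a) (f (a + 1))]

theorem MonotoneOn.sum_range_le_add_integral_of_antitoneOn (hm : 0 ≤ m)
    (hmono : MonotoneOn f (Icc 0 m)) (hanti : AntitoneOn f (Ici m))
    (hint : IntegrableOn f (Ioi 0)) (hf0 : ∀ x, 0 ≤ x → 0 ≤ f x) (n : ℕ) :
    ∑ k ∈ Finset.range n, f k ≤ f m + ∫ x in Ioi 0, f x := by
  set a := ⌊m⌋₊
  have ha : (a : ℝ) ≤ m := Nat.floor_le hm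
  have ha' : m < a + 1 := Nat.lt_floor_add_one m
  set N := n + a + 1
  have hII (c d : ℝ) (hc : 0 ≤ c) (hcd : c ≤ d) : IntervalIntegrable f volume c d :=
    (intervalIntegrable_iff_integrableOn_Ioc_of_le hcd).2
      (hint.mono_set fun x hx => hc.trans_lt hx.1)
  -- Terms before `a` are compared with the integral on their right, terms after `a + 1` with
  -- the integral on their left.
  have left : ∑ k ∈ Finset.Ico 0 a, f k ≤ ∫ x in (0 : ℝ)..a, f x := by
    simpa using MonotoneOn.sum_le_integral_Ico (Nat.zero_le a)
      (by simpa using hmono.mono (Icc_subset_Icc le_rfl ha))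
  have right :
      ∑ k ∈ Finset.Ico (a + 1) N, f ↑(k + 1) ≤ ∫ x in ((a + 1 : ℕ) : ℝ)..N, f x :=
    (hanti.mono fun x hx => mem_Ici.2 (by push_cast at hx; linarith [hx.1])).sum_le_integral_Ico
      (by omega)
  have middle := hmono.add_apply_add_one_le_of_antitoneOn hanti a.cast_nonneg
    (hII _ _ a.cast_nonneg (by linarith))
  have split : ∑ k ∈ Finset.range (N + 1), f k = ∑ k ∈ Finset.Ico 0 a, f k
      + (f a + f (a + 1)) + ∑ k ∈ Finset.Ico (a + 1) N, f ↑(k + 1) := by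
    rw [Finset.range_eq_Ico,
      ← Finset.sum_Ico_consecutive _ (Nat.zero_le a) (by omega : a ≤ N + 1),
      Finset.sum_eq_sum_Ico_succ_bot (by omega : a < N + 1),
      Finset.sum_eq_sum_Ico_succ_bot (by omega : a + 1 < N + 1),
      Finset.sum_Ico_add' (fun k : ℕ => f k)]
    push_cast
    ring
  have glue : (∫ x in (0 : ℝ)..a, f x) + (∫ x in (a : ℝ)..a + 1, f x)
      + ∫ x in ((a + 1 : ℕ) : ℝ)..N, f x = ∫ x in (0 : ℝ)..N, f x := by
    push_cast
    rw [intervalIntegral.integral_add_adjacent_intervals (hII _ _ le_rfl a.cast_nonneg)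
      (hII _ _ a.cast_nonneg (by linarith)),
      intervalIntegral.integral_add_adjacent_intervals (hII _ _ le_rfl (by positivity))
      (hII _ _ (by positivity) (by simp [N]))]
  have tail : ∫ x in (0 : ℝ)..N, f x ≤ ∫ x in Ioi 0, f x := by
    rw [intervalIntegral.integral_of_le N.cast_nonneg]
    exact setIntegral_mono_set hint
      ((ae_restrict_iff' measurableSet_Ioi).2 (.of_forall fun x hx => hf0 x hx.le))
      Ioc_subset_Ioi_self.eventuallyLE
  calc ∑ k ∈ Finset.range n, f k ≤ ∑ k ∈ Finset.range (N + 1), f k :=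
        Finset.sum_le_sum_of_subset_of_nonneg (Finset.range_subset_range.2 (by omega))
          fun k _ _ => hf0 k k.cast_nonneg
    _ ≤ f m + ∫ x in Ioi 0, f x := by linarith

end Unimodal

section RpowMulExp

variable {p l : ℝ}

lemma hasDerivAt_rpow_mul_exp_neg_mul {x : ℝ} (hx : 0 < x) :
    HasDerivAt (fun x => x ^ p * exp (-(l * x)))
      ((p - l * x) * x ^ (p - 1) * exp (-(l * x))) x := by
  have hpow := hasDerivAt_rpow_const (p := p) (Or.inl hx.ne')
  have hexp : HasDerivAt (fun x => exp (-(l * x))) (exp (-(l * x)) * -l) x := by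
    simpa using ((hasDerivAt_id x).const_mul l).neg.exp
  refine (hpow.mul hexp).congr_deriv ?_
  rw [show x ^ p = x ^ (p - 1) * x by rw [← rpow_add_one hx.ne', sub_add_cancel]]
  ring

lemma continuous_rpow_mul_exp_neg_mul (hp : 0 ≤ p) :
    Continuous fun x : ℝ => x ^ p * exp (-(l * x)) := by
  have := continuous_rpow_const hp
  fun_prop

lemma monotoneOn_rpow_mul_exp_neg_mul (hp : 0 ≤ p) (hl : 0 < l) :
    MonotoneOn (fun x => x ^ p * exp (-(l * x))) (Icc 0 (p / l)) := by
  refine monotoneOn_of_hasDerivWithinAt_nonneg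
    (f' := fun x => (p - l * x) * x ^ (p - 1) * exp (-(l * x))) (convex_Icc _ _)
    (continuous_rpow_mul_exp_neg_mul hp).continuousOn (fun x hx => ?_) fun x hx => ?_ <;>
    rw [interior_Icc] at hx
  · exact (hasDerivAt_rpow_mul_exp_neg_mul hx.1).hasDerivWithinAt
  have : l * x ≤ p := by have := hx.2; rw [lt_div_iff₀ hl] at this; linarith
  have := rpow_nonneg hx.1.le (p - 1)
  have := exp_pos (-(l * x))
  positivity

lemma antitoneOn_rpow_mul_exp_neg_mul (hp : 0 ≤ p) (hl : 0 < l) :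
    AntitoneOn (fun x => x ^ p * exp (-(l * x))) (Ici (p / l)) := by
  refine antitoneOn_of_hasDerivWithinAt_nonpos
    (f' := fun x => (p - l * x) * x ^ (p - 1) * exp (-(l * x))) (convex_Ici _)
    (continuous_rpow_mul_exp_neg_mul hp).continuousOn (fun x hx => ?_) fun x hx => ?_ <;>
    rw [interior_Ici] at hx <;> have hx0 : 0 < x := (div_nonneg hp hl.le).trans_lt hx
  · exact (hasDerivAt_rpow_mul_exp_neg_mul hx0).hasDerivWithinAt
  have : p ≤ l * x := by have := le_of_lt (mem_Ioi.1 hx); rw [div_le_iff₀ hl] at this; linarith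
  exact mul_nonpos_of_nonpos_of_nonneg
    (mul_nonpos_of_nonpos_of_nonneg (by linarith) (rpow_nonneg hx0.le _)) (exp_pos _).le

lemma integral_rpow_mul_exp_neg_mul_Ioi_eq_Gamma_div (hp : -1 < p) (hl : 0 < l) :
    ∫ x in Ioi 0, x ^ p * exp (-(l * x)) = Gamma (p + 1) / l ^ (p + 1) := by
  have h := integral_rpow_mul_exp_neg_mul_Ioi (neg_lt_iff_pos_add.1 hp) hl
  rw [add_sub_cancel_right] at h
  rw [h, div_rpow zero_le_one hl.le, one_rpow, one_div_mul_eq_div]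

lemma integrableOn_rpow_mul_exp_neg_mul_Ioi (hp : -1 < p) (hl : 0 < l) :
    IntegrableOn (fun x => x ^ p * exp (-(l * x))) (Ioi 0) :=
  .of_integral_ne_zero <| by
    rw [integral_rpow_mul_exp_neg_mul_Ioi_eq_Gamma_div hp hl]
    exact (div_pos (Gamma_pos_of_pos (neg_lt_iff_pos_add.1 hp)) (rpow_pos_of_pos hl _)).ne'

theorem tsum_rpow_mul_exp_neg_mul_le (hp : 0 ≤ p) (hl : 0 < l) :
    ∑' k : ℕ, (k : ℝ) ^ p * exp (-(l * k))
      ≤ (p / l) ^ p * exp (-p) + Gamma (p + 1) / l ^ (p + 1) := by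
  have hpeak : (p / l) ^ p * exp (-(l * (p / l))) = (p / l) ^ p * exp (-p) := by
    rw [mul_div_cancel₀ p hl.ne']
  rw [← hpeak, ← integral_rpow_mul_exp_neg_mul_Ioi_eq_Gamma_div (by linarith) hl]
  exact Real.tsum_le_of_sum_range_le (fun k => by positivity) <|
    (monotoneOn_rpow_mul_exp_neg_mul hp hl).sum_range_le_add_integral_of_antitoneOn
      (div_nonneg hp hl.le) (antitoneOn_rpow_mul_exp_neg_mul hp hl)
      (integrableOn_rpow_mul_exp_neg_mul_Ioi (by linarith) hl) fun x hx => by positivity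

end RpowMulExp

lemma rpow_le_one_add_rpow_add_one {x p : ℝ} (hx : 0 ≤ x) (hp : 0 ≤ p) :
    x ^ p ≤ 1 + x ^ (p + 1) := by
  rcases le_total x 1 with h | h
  · linarith [rpow_le_one hx h hp, rpow_nonneg hx (p + 1)]
  · linarith [rpow_le_rpow_of_exponent_le h (le_add_of_nonneg_right zero_le_one : p ≤ p + 1)]

/-- **Proposition 7.1**: if `Y` is geometric with parameter `θ ∈ (0,1)`, i.e.
`𝐏(Y = k) = (1-θ)^k θ` for `k ≥ 0`, and `λ = -ln(1-θ)`, then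
`𝐄[Y^p] ≤ C_p θ/λ^{p+1} + 1` with the explicit constant
`C_p = p^{p+1} e^{-p} + Γ(p+1)`, which depends only on `p`. -/
theorem geometric_moment_bound (p : ℝ) (hp : 0 < p) (θ : ℝ)
    (hθ : θ ∈ Set.Ioo (0:ℝ) 1) :
    ∑' k : ℕ, (k : ℝ) ^ p * (1 - θ) ^ k * θ
      ≤ (p ^ (p + 1) * Real.exp (-p) + Real.Gamma (p + 1))
          * (θ / (-Real.log (1 - θ)) ^ (p + 1)) + 1 := by
  obtain ⟨hθ0, hθ1⟩ := hθ
  set l := -log (1 - θ) with hl_def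
  have hl : 0 < l := neg_pos.2 (log_neg (by linarith) (by linarith))
  have hgeom (k : ℕ) : (1 - θ) ^ k = exp (-(l * k)) := by
    rw [show -(l * k) = log (1 - θ) * k by rw [hl_def]; ring, exp_mul, exp_log (by linarith),
      rpow_natCast]
  have hpeak :
      θ * ((p / l) ^ p * exp (-p)) ≤ p ^ (p + 1) * exp (-p) * (θ / l ^ (p + 1)) + 1 := by
    have hθexp : θ * exp (-p) ≤ 1 :=
      mul_le_one₀ hθ1.le (exp_pos _).le (exp_le_one_iff.2 (by linarith))
    calc θ * ((p / l) ^ p * exp (-p)) ≤ θ * ((1 + (p / l) ^ (p + 1)) * exp (-p)) := by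
          gcongr; exact rpow_le_one_add_rpow_add_one (by positivity) hp.le
      _ = p ^ (p + 1) * exp (-p) * (θ / l ^ (p + 1)) + θ * exp (-p) := by
          rw [div_rpow hp.le hl.le]; ring
      _ ≤ _ := by gcongr
  calc ∑' k : ℕ, (k : ℝ) ^ p * (1 - θ) ^ k * θ
        = θ * ∑' k : ℕ, (k : ℝ) ^ p * exp (-(l * k)) := by
        rw [← tsum_mul_left]; simp only [hgeom, mul_comm θ]
    _ ≤ θ * ((p / l) ^ p * exp (-p) + Gamma (p + 1) / l ^ (p + 1)) := by
        gcongr; exact tsum_rpow_mul_exp_neg_mul_le hp.le hl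
    _ = θ * ((p / l) ^ p * exp (-p)) + Gamma (p + 1) * (θ / l ^ (p + 1)) := by ring
    _ ≤ _ := by linarith
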